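/- arXiv:2210.17048 — 4 statements merged into one kernel-verified Lean document; each statement's English description precedes it below -/
import Mathlib

section
/- Let n ≥ 1, let 0 < τ₁ < τ₂ be temperatures with τ_δ = 1/τ₁ − 1/τ₂, let L ∈ ℝ^{n×n} be a symmetric matrix, let c ≥ 0, and let U : ℝⁿ → ℝ be continuously differentiable with exp(−U(x)/τ₁ − U(y)/τ₂) Lebesgue integrable over ℝⁿ × ℝⁿ. Then for every twice continuously differentiable compactly supported f : ℝⁿ × ℝⁿ → ℝ, the density π is infinitesimally invariant for the generator: ∫∫ (𝓛ᶜf)(x,y) π(x,y) dx dy = 0. -/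
/-!
With `ρ_τ = exp(-U/τ)` the density factors as `π(x, y) = ρ_{τ₁}(x) ρ_{τ₂}(y)`. For a fixed `y`, the
symmetry of `L` puts the `x`-Langevin part of `𝓛ᶜf` times `ρ_{τ₁}` in divergence form
`τ₁ ∑ L_ij ∂_i (ρ_{τ₁} ∂_j f)`, whose integral over `x` vanishes since `f` has compact support; the
same holds in `y`. For the jump part, detailed balance `s(x,y) π(x,y) = min(π(x,y), π(y,x))` makes
the integrand antisymmetric under `(x, y) ↦ (y, x)`, so it integrates to zero. Compact support of
`f` gives the integrability needed for Fubini.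
-/

open MeasureTheory Matrix

/-- The swap function `s(x,y) = min{1, exp(τ_δ (U(x) − U(y)))}` with `τ_δ = 1/τ₁ − 1/τ₂`. -/
noncomputable def swapS {n : ℕ} (τ₁ τ₂ : ℝ) (U : (Fin n → ℝ) → ℝ) (x y : Fin n → ℝ) : ℝ :=
  min 1 (Real.exp ((1 / τ₁ - 1 / τ₂) * (U x - U y)))

/-- The joint density `π(x,y) = exp(−U(x)/τ₁ − U(y)/τ₂)`. -/
noncomputable def jointDensity {n : ℕ} (τ₁ τ₂ : ℝ) (U : (Fin n → ℝ) → ℝ)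
    (x y : Fin n → ℝ) : ℝ :=
  Real.exp (-(U x) / τ₁ - U y / τ₂)

/-- The gradient vector of `h : ℝⁿ → ℝ` at `x`, with components `∂h/∂x_i(x)`. -/
noncomputable def gradVec {n : ℕ} (h : (Fin n → ℝ) → ℝ) (x : Fin n → ℝ) : Fin n → ℝ :=
  fun i => fderiv ℝ h x (Pi.single i 1)

/-- The generator `𝓛ᶜ` of the replica exchange preconditioned Langevin jump process. -/
noncomputable def repGen {n : ℕ} (L : Matrix (Fin n) (Fin n) ℝ) (τ₁ τ₂ c : ℝ)
    (U : (Fin n → ℝ) → ℝ) (f : (Fin n → ℝ) → (Fin n → ℝ) → ℝ) (x y : Fin n → ℝ) : ℝ :=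
  -((L.mulVec (gradVec U x)) ⬝ᵥ (gradVec (fun x' => f x' y) x))
    + τ₁ * ∑ i, ∑ j, L i j *
        gradVec (fun x' => gradVec (fun x'' => f x'' y) x' j) x i
    - (L.mulVec (gradVec U y)) ⬝ᵥ (gradVec (f x) y)
    + τ₂ * ∑ i, ∑ j, L i j *
        gradVec (fun y' => gradVec (f x) y' j) y i
    + c * swapS τ₁ τ₂ U x y * (f y x - f x y)

open Filter Topology

section

variable {E : Type*} [NormedAddCommGroup E] [NormedSpace ℝ E] [FiniteDimensional ℝ E]
  [MeasurableSpace E] [BorelSpace E] {μ : Measure E} [μ.IsAddHaarMeasure]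

theorem integral_fderiv_apply_eq_zero {g : E → ℝ} (hg : ContDiff ℝ 1 g)
    (hgc : HasCompactSupport g) (v : E) : ∫ x, fderiv ℝ g x v ∂μ = 0 := by
  have hg' : Continuous fun x => fderiv ℝ g x v :=
    (hg.continuous_fderiv one_ne_zero).clm_apply continuous_const
  simpa using integral_mul_fderiv_eq_neg_fderiv_mul_of_integrable (μ := μ)
    (f := fun _ => (1 : ℝ)) (g := g) (v := v) (by simp)
    (by simpa using hg'.integrable_of_hasCompactSupport (hgc.fderiv_apply ℝ v))
    (by simpa using hg.continuous.integrable_of_hasCompactSupport hgc)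
    (fun x _ => differentiableAt_const _) (fun x _ => hg.differentiable one_ne_zero x)

end

theorem integral_prod_self_eq_zero_of_swap_eq_neg {α : Type*} [MeasurableSpace α]
    {μ : Measure α} [SFinite μ] {g : α × α → ℝ} (hg : ∀ q, g q.swap = -g q) :
    ∫ q, g q ∂μ.prod μ = 0 := by
  have h := integral_prod_swap (μ := μ) (ν := μ) g
  simp only [hg, integral_neg] at h
  linarith

theorem HasCompactSupport.of_uncurry {X Y M : Type*} [TopologicalSpace X] [TopologicalSpace Y]
    [Zero M] {Φ : X → Y → M} (hΦ : HasCompactSupport (Function.uncurry Φ)) (x : X) :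
    HasCompactSupport (Φ x) :=
  IsCompact.of_isClosed_subset (hΦ.image continuous_snd) (isClosed_tsupport _)
    fun y hy => ⟨(x, y), (Continuous.prodMk_right x).closure_preimage_subset _ hy, rfl⟩

section Langevin

variable {n : ℕ} {L : Matrix (Fin n) (Fin n) ℝ} {τ : ℝ} {U φ : (Fin n → ℝ) → ℝ}

noncomputable def langevinGen (L : Matrix (Fin n) (Fin n) ℝ) (τ : ℝ) (U φ : (Fin n → ℝ) → ℝ)
    (z : Fin n → ℝ) : ℝ :=
  -(L *ᵥ gradVec U z ⬝ᵥ gradVec φ z) + τ * ∑ i, ∑ j, L i j * gradVec (fun z' => gradVec φ z' j) z i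

theorem langevinGen_mul_exp_eq (hL : L.IsSymm) (hτ : τ ≠ 0) (hU : ContDiff ℝ 1 U)
    (hφ : ContDiff ℝ 2 φ) (z : Fin n → ℝ) :
    langevinGen L τ U φ z * Real.exp (-U z / τ) =
      τ * ∑ i, ∑ j, L i j * gradVec (fun w => gradVec φ w j * Real.exp (-U w / τ)) z i := by
  have hρ : HasFDerivAt (fun w => Real.exp (-U w / τ))
      (Real.exp (-U z / τ) • (τ⁻¹ • -fderiv ℝ U z)) z := by
    simpa only [div_eq_mul_inv, Pi.neg_apply] using
      ((hU.differentiable one_ne_zero z).hasFDerivAt.neg.mul_const τ⁻¹).exp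
  have ha : ∀ j, DifferentiableAt ℝ (fun w => gradVec φ w j) z := fun j =>
    ((hφ.fderiv_right (m := 1) (by norm_num)).clm_apply contDiff_const).differentiable
      one_ne_zero z
  have hprod : ∀ i j, gradVec (fun w => gradVec φ w j * Real.exp (-U w / τ)) z i =
      gradVec (fun w => gradVec φ w j) z i * Real.exp (-U z / τ)
        - τ⁻¹ * (gradVec φ z j * gradVec U z i * Real.exp (-U z / τ)) := by
    intro i j
    simp only [gradVec] at ha ⊢
    rw [((ha j).hasFDerivAt.fun_mul hρ).fderiv]
    simp
    ring
  simp only [hprod, langevinGen, mulVec, dotProduct, Finset.sum_mul, Finset.mul_sum, mul_sub,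
    Finset.sum_sub_distrib, add_mul, neg_mul, ← Finset.sum_neg_distrib]
  conv_lhs => rw [Finset.sum_comm]
  rw [sub_eq_add_neg, ← Finset.sum_neg_distrib, add_comm]
  congr 1
  · exact Finset.sum_congr rfl fun i _ => Finset.sum_congr rfl fun j _ => by ring
  · refine Finset.sum_congr rfl fun i _ => ?_
    rw [← Finset.sum_neg_distrib]
    refine Finset.sum_congr rfl fun j _ => ?_
    rw [hL.apply]
    field_simp

theorem integral_langevinGen_mul_exp_eq_zero (hL : L.IsSymm) (hτ : τ ≠ 0)
    (hU : ContDiff ℝ 1 U) (hφ : ContDiff ℝ 2 φ) (hφc : HasCompactSupport φ) :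
    ∫ z, langevinGen L τ U φ z * Real.exp (-U z / τ) = 0 := by
  have hg : ∀ j, ContDiff ℝ 1 fun w => gradVec φ w j * Real.exp (-U w / τ) := fun j =>
    ((hφ.fderiv_right (m := 1) (by norm_num)).clm_apply contDiff_const).mul (by fun_prop)
  have hgc : ∀ j, HasCompactSupport fun w => gradVec φ w j * Real.exp (-U w / τ) := fun j =>
    (hφc.fderiv_apply ℝ _).mul_right
  have hint : ∀ i j, Integrable fun z =>
      gradVec (fun w => gradVec φ w j * Real.exp (-U w / τ)) z i := fun i j =>
    Continuous.integrable_of_hasCompactSupport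
      (((hg j).continuous_fderiv one_ne_zero).clm_apply continuous_const)
      ((hgc j).fderiv_apply ℝ _)
  have hzero : ∀ i j,
      ∫ z, L i j * gradVec (fun w => gradVec φ w j * Real.exp (-U w / τ)) z i = 0 := by
    intro i j
    rw [integral_const_mul]
    exact mul_eq_zero_of_right _ (integral_fderiv_apply_eq_zero (hg j) (hgc j) _)
  simp_rw [langevinGen_mul_exp_eq hL hτ hU hφ, integral_const_mul]
  rw [integral_finsetSum _ fun i _ =>
    integrable_finsetSum _ fun j _ => (hint i j).const_mul (L i j)]
  simp_rw [integral_finsetSum _ fun j _ => (hint _ j).const_mul _, hzero]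
  simp

theorem langevinGen_eq_zero_of_eventuallyEq_zero {z : Fin n → ℝ} (h : φ =ᶠ[𝓝 z] 0) :
    langevinGen L τ U φ z = 0 := by
  have hd : ∀ᶠ w in 𝓝 z, gradVec φ w = 0 :=
    (h.fderiv (𝕜 := ℝ)).mono fun w hw => by ext j; simp [gradVec, hw]
  have hd2 : ∀ j, gradVec (fun w => gradVec φ w j) z = 0 := fun j => by
    have hj : (fun w => gradVec φ w j) =ᶠ[𝓝 z] fun _ => 0 := hd.mono fun w hw => congrFun hw j
    ext i
    change fderiv ℝ (fun w => gradVec φ w j) z (Pi.single i 1) = 0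
    simp [hj.fderiv_eq]
  simp [langevinGen, hd.self_of_nhds, hd2]

theorem HasCompactSupport.langevinGen_uncurry {P : Type*} [TopologicalSpace P]
    {Φ : P → (Fin n → ℝ) → ℝ} (hΦ : HasCompactSupport (Function.uncurry Φ)) :
    HasCompactSupport fun q : P × (Fin n → ℝ) => langevinGen L τ U (Φ q.1) q.2 := by
  refine hΦ.mono' fun q hq => ?_
  by_contra hq'
  refine hq (langevinGen_eq_zero_of_eventuallyEq_zero ?_)
  exact (Continuous.prodMk_right q.1).continuousAt.eventually
    (notMem_tsupport_iff_eventuallyEq.1 hq')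

theorem continuous_langevinGen_uncurry {P : Type*} [NormedAddCommGroup P] [NormedSpace ℝ P]
    {Φ : P → (Fin n → ℝ) → ℝ} (hU : ContDiff ℝ 1 U)
    (hΦ : ContDiff ℝ 2 (Function.uncurry Φ)) :
    Continuous fun q : P × (Fin n → ℝ) => langevinGen L τ U (Φ q.1) q.2 := by
  have h1 : ContDiff ℝ 1 fun q : P × (Fin n → ℝ) => fderiv ℝ (Φ q.1) q.2 :=
    ContDiff.fderiv (f := fun q => Φ q.1) (hΦ.comp (contDiff_fst.fst.prodMk contDiff_snd))
      contDiff_snd (by norm_num)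
  have h2 : ∀ j, Continuous fun q : P × (Fin n → ℝ) =>
      fderiv ℝ (fun w => fderiv ℝ (Φ q.1) w (Pi.single j 1)) q.2 := fun j =>
    (ContDiff.fderiv (f := fun q w => fderiv ℝ (Φ q.1) w (Pi.single j 1))
      ((h1.comp (contDiff_fst.fst.prodMk contDiff_snd)).clm_apply contDiff_const)
      contDiff_snd (by norm_num : (0 : WithTop ℕ∞) + 1 ≤ 1)).continuous
  have h1' : ∀ j, Continuous fun q : P × (Fin n → ℝ) => fderiv ℝ (Φ q.1) q.2 (Pi.single j 1) :=
    fun j => h1.continuous.clm_apply continuous_const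
  have hU' : ∀ i, Continuous fun q : P × (Fin n → ℝ) => fderiv ℝ U q.2 (Pi.single i 1) :=
    fun i => ((hU.continuous_fderiv one_ne_zero).comp continuous_snd).clm_apply continuous_const
  simp only [langevinGen, gradVec, mulVec, dotProduct]
  fun_prop

theorem integrable_langevinGen_uncurry_mul (hU : ContDiff ℝ 1 U)
    {Φ : (Fin n → ℝ) → (Fin n → ℝ) → ℝ} (hΦ : ContDiff ℝ 2 (Function.uncurry Φ))
    (hΦc : HasCompactSupport (Function.uncurry Φ)) {w : (Fin n → ℝ) × (Fin n → ℝ) → ℝ}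
    (hw : Continuous w) :
    Integrable fun q : (Fin n → ℝ) × (Fin n → ℝ) => langevinGen L τ U (Φ q.1) q.2 * w q :=
  ((continuous_langevinGen_uncurry hU hΦ).mul hw).integrable_of_hasCompactSupport
    hΦc.langevinGen_uncurry.mul_right

theorem integral_langevinGen_uncurry_mul_exp_eq_zero (hL : L.IsSymm) (hτ : τ ≠ 0)
    (hU : ContDiff ℝ 1 U) {Φ : (Fin n → ℝ) → (Fin n → ℝ) → ℝ}
    (hΦ : ContDiff ℝ 2 (Function.uncurry Φ)) (hΦc : HasCompactSupport (Function.uncurry Φ))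
    {w : (Fin n → ℝ) → ℝ} (hw : Continuous w) :
    ∫ q : (Fin n → ℝ) × (Fin n → ℝ),
      langevinGen L τ U (Φ q.1) q.2 * (w q.1 * Real.exp (-U q.2 / τ)) = 0 := by
  have hρ : Continuous fun z => Real.exp (-U z / τ) := by fun_prop
  rw [Measure.volume_eq_prod,
    integral_prod _ (integrable_langevinGen_uncurry_mul hU hΦ hΦc (by fun_prop))]
  refine integral_eq_zero_of_ae (Eventually.of_forall fun x => ?_)
  have hx := integral_langevinGen_mul_exp_eq_zero (φ := Φ x) hL hτ hU
    (hΦ.comp (contDiff_prodMk_right x)) (hΦc.of_uncurry x)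
  calc ∫ y, langevinGen L τ U (Φ x) y * (w x * Real.exp (-U y / τ))
      = w x * ∫ y, langevinGen L τ U (Φ x) y * Real.exp (-U y / τ) := by
        rw [← integral_const_mul]
        simp only [mul_left_comm]
    _ = 0 := by rw [hx, mul_zero]

end Langevin

section ReplicaExchange

variable {n : ℕ} {L : Matrix (Fin n) (Fin n) ℝ} {τ₁ τ₂ c : ℝ} {U : (Fin n → ℝ) → ℝ}
  {f : (Fin n → ℝ) → (Fin n → ℝ) → ℝ}

theorem repGen_eq (x y : Fin n → ℝ) :
    repGen L τ₁ τ₂ c U f x y = langevinGen L τ₁ U (fun x' => f x' y) x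
      + langevinGen L τ₂ U (f x) y + c * swapS τ₁ τ₂ U x y * (f y x - f x y) := by
  rw [repGen, langevinGen, langevinGen]
  ring

theorem jointDensity_eq_mul (x y : Fin n → ℝ) :
    jointDensity τ₁ τ₂ U x y = Real.exp (-U x / τ₁) * Real.exp (-U y / τ₂) := by
  rw [jointDensity, ← Real.exp_add, neg_div, sub_eq_add_neg, neg_div]

variable (L τ₁ τ₂) in
theorem integrable_langevinGen_right_mul_jointDensity (hU : ContDiff ℝ 1 U)
    (hf : ContDiff ℝ 2 (Function.uncurry f)) (hfc : HasCompactSupport (Function.uncurry f)) :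
    Integrable fun q : (Fin n → ℝ) × (Fin n → ℝ) =>
      langevinGen L τ₂ U (f q.1) q.2 * jointDensity τ₁ τ₂ U q.1 q.2 := by
  have hUc := hU.continuous
  exact integrable_langevinGen_uncurry_mul hU hf hfc
    (w := fun q => jointDensity τ₁ τ₂ U q.1 q.2) (by unfold jointDensity; fun_prop)

theorem integral_langevinGen_right_mul_jointDensity_eq_zero (hL : L.IsSymm) (hτ₂ : τ₂ ≠ 0)
    (hU : ContDiff ℝ 1 U) (hf : ContDiff ℝ 2 (Function.uncurry f))
    (hfc : HasCompactSupport (Function.uncurry f)) :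
    ∫ q : (Fin n → ℝ) × (Fin n → ℝ),
      langevinGen L τ₂ U (f q.1) q.2 * jointDensity τ₁ τ₂ U q.1 q.2 = 0 := by
  have hUc := hU.continuous
  simp_rw [jointDensity_eq_mul]
  exact integral_langevinGen_uncurry_mul_exp_eq_zero hL hτ₂ hU hf hfc
    (w := fun x => Real.exp (-U x / τ₁)) (by fun_prop)

variable (L τ₁ τ₂) in
theorem integrable_langevinGen_left_mul_jointDensity (hU : ContDiff ℝ 1 U)
    (hf : ContDiff ℝ 2 (Function.uncurry f)) (hfc : HasCompactSupport (Function.uncurry f)) :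
    Integrable fun q : (Fin n → ℝ) × (Fin n → ℝ) =>
      langevinGen L τ₁ U (fun x' => f x' q.2) q.1 * jointDensity τ₁ τ₂ U q.1 q.2 := by
  have hUc := hU.continuous
  refine integrable_swap_iff.1 <| integrable_langevinGen_uncurry_mul (Φ := Function.swap f) hU
    (hf.comp (contDiff_snd.prodMk contDiff_fst)) (hfc.comp_homeomorph (Homeomorph.prodComm _ _))
    (w := fun p => jointDensity τ₁ τ₂ U p.2 p.1) ?_
  unfold jointDensity
  fun_prop

theorem integral_langevinGen_left_mul_jointDensity_eq_zero (hL : L.IsSymm) (hτ₁ : τ₁ ≠ 0)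
    (hU : ContDiff ℝ 1 U) (hf : ContDiff ℝ 2 (Function.uncurry f))
    (hfc : HasCompactSupport (Function.uncurry f)) :
    ∫ q : (Fin n → ℝ) × (Fin n → ℝ),
      langevinGen L τ₁ U (fun x' => f x' q.2) q.1 * jointDensity τ₁ τ₂ U q.1 q.2 = 0 := by
  have hUc := hU.continuous
  rw [Measure.volume_eq_prod, ← integral_prod_swap]
  simp_rw [Prod.fst_swap, Prod.snd_swap, jointDensity_eq_mul, mul_comm (Real.exp (-U _ / τ₁))]
  exact integral_langevinGen_uncurry_mul_exp_eq_zero (Φ := Function.swap f) hL hτ₁ hU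
    (hf.comp (contDiff_snd.prodMk contDiff_fst)) (hfc.comp_homeomorph (Homeomorph.prodComm _ _))
    (w := fun y => Real.exp (-U y / τ₂)) (by fun_prop)

theorem swapS_mul_jointDensity (x y : Fin n → ℝ) :
    swapS τ₁ τ₂ U x y * jointDensity τ₁ τ₂ U x y =
      min (jointDensity τ₁ τ₂ U x y) (jointDensity τ₁ τ₂ U y x) := by
  rw [swapS, jointDensity, jointDensity, min_mul_of_nonneg _ _ (Real.exp_pos _).le, one_mul,
    ← Real.exp_add]
  congr 2
  ring

variable (τ₁ τ₂ c) in
theorem integrable_swapS_mul_jointDensity (hU : Continuous U)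
    (hf : Continuous (Function.uncurry f)) (hfc : HasCompactSupport (Function.uncurry f)) :
    Integrable fun q : (Fin n → ℝ) × (Fin n → ℝ) => c * swapS τ₁ τ₂ U q.1 q.2
      * (f q.2 q.1 - f q.1 q.2) * jointDensity τ₁ τ₂ U q.1 q.2 := by
  have hfxy : Continuous fun q : (Fin n → ℝ) × (Fin n → ℝ) => f q.1 q.2 := hf
  have hfyx : Continuous fun q : (Fin n → ℝ) × (Fin n → ℝ) => f q.2 q.1 := hf.comp continuous_swap
  refine Continuous.integrable_of_hasCompactSupport ?_
    ((hfc.comp_homeomorph (Homeomorph.prodComm _ _)).sub hfc).mul_left.mul_right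
  simp only [swapS, jointDensity]
  fun_prop

theorem integral_swapS_mul_jointDensity_eq_zero :
    ∫ q : (Fin n → ℝ) × (Fin n → ℝ), c * swapS τ₁ τ₂ U q.1 q.2 * (f q.2 q.1 - f q.1 q.2)
      * jointDensity τ₁ τ₂ U q.1 q.2 = 0 := by
  rw [Measure.volume_eq_prod]
  refine integral_prod_self_eq_zero_of_swap_eq_neg fun q => ?_
  have hbalance : swapS τ₁ τ₂ U q.2 q.1 * jointDensity τ₁ τ₂ U q.2 q.1
      = swapS τ₁ τ₂ U q.1 q.2 * jointDensity τ₁ τ₂ U q.1 q.2 := by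
    rw [swapS_mul_jointDensity, swapS_mul_jointDensity, min_comm]
  simp only [Prod.fst_swap, Prod.snd_swap]
  linear_combination (c * (f q.1 q.2 - f q.2 q.1)) * hbalance

end ReplicaExchange

theorem repGen_invariance_general (n : ℕ)
    (τ₁ τ₂ : ℝ) (hτ₁ : 0 < τ₁) (hτ₁₂ : τ₁ < τ₂)
    (L : Matrix (Fin n) (Fin n) ℝ) (hL : L.IsSymm)
    (c : ℝ)
    (U : (Fin n → ℝ) → ℝ) (hU : ContDiff ℝ 1 U)
    (f : (Fin n → ℝ) → (Fin n → ℝ) → ℝ)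
    (hf : ContDiff ℝ 2 (Function.uncurry f)) (hfc : HasCompactSupport (Function.uncurry f)) :
    ∫ x : Fin n → ℝ, ∫ y : Fin n → ℝ,
        repGen L τ₁ τ₂ c U f x y * jointDensity τ₁ τ₂ U x y = 0 := by
  have hleft := integrable_langevinGen_left_mul_jointDensity L τ₁ τ₂ hU hf hfc
  have hright := integrable_langevinGen_right_mul_jointDensity L τ₁ τ₂ hU hf hfc
  have hswap := integrable_swapS_mul_jointDensity τ₁ τ₂ c hU.continuous hf.continuous hfc
  calc ∫ x, ∫ y, repGen L τ₁ τ₂ c U f x y * jointDensity τ₁ τ₂ U x y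
      = ∫ q : (Fin n → ℝ) × (Fin n → ℝ),
          langevinGen L τ₁ U (fun x' => f x' q.2) q.1 * jointDensity τ₁ τ₂ U q.1 q.2
          + langevinGen L τ₂ U (f q.1) q.2 * jointDensity τ₁ τ₂ U q.1 q.2
          + c * swapS τ₁ τ₂ U q.1 q.2 * (f q.2 q.1 - f q.1 q.2) * jointDensity τ₁ τ₂ U q.1 q.2 := by
        rw [Measure.volume_eq_prod, integral_prod _ ((hleft.fun_add hright).fun_add hswap)]
        simp_rw [repGen_eq, add_mul]
    _ = 0 := by
        rw [integral_add (hleft.fun_add hright) hswap, integral_add hleft hright,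
          integral_langevinGen_left_mul_jointDensity_eq_zero hL hτ₁.ne' hU hf hfc,
          integral_langevinGen_right_mul_jointDensity_eq_zero hL (hτ₁.trans hτ₁₂).ne' hU hf hfc,
          integral_swapS_mul_jointDensity_eq_zero, add_zero, add_zero]

/-- Infinitesimal invariance of the density `π` for the replica exchange generator:
`∫∫ (𝓛ᶜ f)(x,y) π(x,y) dx dy = 0` for all `C²` compactly supported `f`. -/
theorem repGen_invariance (n : ℕ) (hn : 1 ≤ n)
    (τ₁ τ₂ : ℝ) (hτ₁ : 0 < τ₁) (hτ₁₂ : τ₁ < τ₂)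
    (L : Matrix (Fin n) (Fin n) ℝ) (hL : L.IsSymm)
    (c : ℝ) (hc : 0 ≤ c)
    (U : (Fin n → ℝ) → ℝ) (hU : ContDiff ℝ 1 U)
    (hπ : Integrable (fun p : (Fin n → ℝ) × (Fin n → ℝ) => jointDensity τ₁ τ₂ U p.1 p.2))
    (f : (Fin n → ℝ) → (Fin n → ℝ) → ℝ)
    (hf : ContDiff ℝ 2 (Function.uncurry f)) (hfc : HasCompactSupport (Function.uncurry f)) :
    ∫ x : Fin n → ℝ, ∫ y : Fin n → ℝ,
        repGen L τ₁ τ₂ c U f x y * jointDensity τ₁ τ₂ U x y = 0 :=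
  repGen_invariance_general n τ₁ τ₂ hτ₁ hτ₁₂ L hL c U hU f hf hfc
end

section
/- Let n ≥ 1, let 0 < τ₁ < τ₂ be temperatures with τ_δ = 1/τ₁ − 1/τ₂, let c ≥ 0, and let U : ℝⁿ → ℝ be continuous. Then for all continuous compactly supported f, g : ℝⁿ × ℝⁿ → ℝ, the swap part of the generator satisfies detailed balance with respect to π: ∫∫ g(x,y) · c·s(x,y)(f(y,x) − f(x,y)) · π(x,y) dx dy = ∫∫ f(x,y) · c·s(x,y)(g(y,x) − g(x,y)) · π(x,y) dx dy. -/
open MeasureTheory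

lemma sPi_symm {n : ℕ} (τ₁ τ₂ : ℝ) (U : (Fin n → ℝ) → ℝ) (x y : Fin n → ℝ) :
    swapS τ₁ τ₂ U x y * jointDensity τ₁ τ₂ U x y
      = swapS τ₁ τ₂ U y x * jointDensity τ₁ τ₂ U y x := by
  unfold swapS jointDensity
  rw [min_mul_of_nonneg _ _ (Real.exp_nonneg _), min_mul_of_nonneg _ _ (Real.exp_nonneg _),
    one_mul, one_mul, ← Real.exp_add, ← Real.exp_add]
  rw [show (1/τ₁ - 1/τ₂) * (U x - U y) + (-(U x)/τ₁ - U y/τ₂) = -(U y)/τ₁ - U x/τ₂ by ring,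
    show (1/τ₁ - 1/τ₂) * (U y - U x) + (-(U y)/τ₁ - U x/τ₂) = -(U x)/τ₁ - U y/τ₂ by ring,
    min_comm]

/-- Detailed balance for the swap part of the replica exchange generator:
`∫∫ g(x,y) · c s(x,y)(f(y,x) − f(x,y)) · π(x,y) dx dy`
 `= ∫∫ f(x,y) · c s(x,y)(g(y,x) − g(x,y)) · π(x,y) dx dy`. -/
theorem swap_detailed_balance (n : ℕ) (hn : 1 ≤ n)
    (τ₁ τ₂ : ℝ) (hτ₁ : 0 < τ₁) (hτ₁₂ : τ₁ < τ₂)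
    (c : ℝ) (hc : 0 ≤ c)
    (U : (Fin n → ℝ) → ℝ) (hU : Continuous U)
    (f g : (Fin n → ℝ) → (Fin n → ℝ) → ℝ)
    (hf : Continuous (Function.uncurry f)) (hfc : HasCompactSupport (Function.uncurry f))
    (hg : Continuous (Function.uncurry g)) (hgc : HasCompactSupport (Function.uncurry g)) :
    ∫ x : Fin n → ℝ, ∫ y : Fin n → ℝ,
        g x y * (c * swapS τ₁ τ₂ U x y * (f y x - f x y)) * jointDensity τ₁ τ₂ U x y
      = ∫ x : Fin n → ℝ, ∫ y : Fin n → ℝ,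
          f x y * (c * swapS τ₁ τ₂ U x y * (g y x - g x y)) * jointDensity τ₁ τ₂ U x y := by
  set F : ((Fin n → ℝ) × (Fin n → ℝ)) → ℝ := fun p =>
    g p.1 p.2 * (c * swapS τ₁ τ₂ U p.1 p.2 * (f p.2 p.1 - f p.1 p.2))
      * jointDensity τ₁ τ₂ U p.1 p.2 with hF
  set G : ((Fin n → ℝ) × (Fin n → ℝ)) → ℝ := fun p =>
    f p.1 p.2 * (c * swapS τ₁ τ₂ U p.1 p.2 * (g p.2 p.1 - g p.1 p.2))
      * jointDensity τ₁ τ₂ U p.1 p.2 with hG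
  have hswapS : Continuous fun p : ((Fin n → ℝ) × (Fin n → ℝ)) => swapS τ₁ τ₂ U p.1 p.2 := by
    unfold swapS
    fun_prop
  have hjd : Continuous fun p : ((Fin n → ℝ) × (Fin n → ℝ)) => jointDensity τ₁ τ₂ U p.1 p.2 := by
    unfold jointDensity
    fun_prop
  have hfs : Continuous fun p : ((Fin n → ℝ) × (Fin n → ℝ)) => f p.2 p.1 := by
    exact hf.comp continuous_swap
  have hgs : Continuous fun p : ((Fin n → ℝ) × (Fin n → ℝ)) => g p.2 p.1 := by
    exact hg.comp continuous_swap
  have hfc1 : Continuous fun p : ((Fin n → ℝ) × (Fin n → ℝ)) => f p.1 p.2 := hf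
  have hgc1 : Continuous fun p : ((Fin n → ℝ) × (Fin n → ℝ)) => g p.1 p.2 := hg
  have hFcont : Continuous F := by
    apply Continuous.mul (Continuous.mul hgc1 _) hjd
    exact (continuous_const.mul hswapS).mul (hfs.sub hfc1)
  have hGcont : Continuous G := by
    apply Continuous.mul (Continuous.mul hfc1 _) hjd
    exact (continuous_const.mul hswapS).mul (hgs.sub hgc1)
  have hFsupp : HasCompactSupport F := by
    exact (hgc.mul_right).mul_right
  have hGsupp : HasCompactSupport G := by
    exact (hfc.mul_right).mul_right
  have hFint : Integrable F (volume.prod volume) := by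
    rw [← Measure.volume_eq_prod]
    exact hFcont.integrable_of_hasCompactSupport hFsupp
  have hGint : Integrable G (volume.prod volume) := by
    rw [← Measure.volume_eq_prod]
    exact hGcont.integrable_of_hasCompactSupport hGsupp
  have hL : (∫ x : Fin n → ℝ, ∫ y : Fin n → ℝ,
        g x y * (c * swapS τ₁ τ₂ U x y * (f y x - f x y)) * jointDensity τ₁ τ₂ U x y)
      = ∫ p, F p ∂(volume.prod volume) := integral_integral hFint
  have hR : (∫ x : Fin n → ℝ, ∫ y : Fin n → ℝ,
        f x y * (c * swapS τ₁ τ₂ U x y * (g y x - g x y)) * jointDensity τ₁ τ₂ U x y)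
      = ∫ p, G p ∂(volume.prod volume) := integral_integral hGint
  rw [hL, hR]
  have hanti : ∀ p : ((Fin n → ℝ) × (Fin n → ℝ)), F p.swap - G p.swap = -(F p - G p) := by
    intro ⟨x, y⟩
    simp only [hF, hG, Prod.swap]
    have h := sPi_symm τ₁ τ₂ U x y
    linear_combination (c * (g x y * f y x - f x y * g y x)) * h
  have key : ∫ p, F p ∂(volume.prod volume) - ∫ p, G p ∂(volume.prod volume) = 0 := by
    rw [← integral_sub hFint hGint]
    have h1 : ∫ p, (F p - G p) ∂(volume.prod volume)
        = ∫ p, (F p.swap - G p.swap) ∂(volume.prod volume) :=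
      (integral_prod_swap (fun p => F p - G p)).symm
    have h2 : ∫ p, (F p.swap - G p.swap) ∂(volume.prod volume)
        = -∫ p, (F p - G p) ∂(volume.prod volume) := by
      simp_rw [hanti]
      exact integral_neg _
    linarith [h1, h2]
  linarith [key]
end

section
/- Let n_d ≥ 1, let σ_o, σ̃ > 0 with r_σ = σ̃²/σ_o², and let τ_δ > 0 satisfy r_σ (τ_δ² + τ_δ) < 1. Let X and Z be independent random vectors in ℝ^{n_d} whose coordinates are independent centered Gaussians with variances σ_o² and σ̃² respectively. Then E[ exp( (τ_δ/(2σ_o²)) ( ‖Z‖² − 2⟨X, Z⟩ ) ) ] = [ 1 − (τ_δ + τ_δ²) r_σ ]^{−n_d/2}. -/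
/-!
Write `c = τ_δ / (2σ_o²)`. Integrating out `X` first, `⟨X, z⟩` is a centered Gaussian of variance
`σ_o² ‖z‖²`, so its moment generating function gives
`E_X[exp(c(‖z‖² − 2⟨X, z⟩))] = exp((c + 2c²σ_o²) ‖z‖²)`. What remains is `E[exp(a ‖Z‖²)]` with
`a = c + 2c²σ_o²`, a product of one-dimensional integrals `E[exp(a Y²)] = (1 − 2aσ̃²)^{−1/2}`,
and `2aσ̃² = (τ_δ + τ_δ²) r_σ`.
-/

open MeasureTheory ProbabilityTheory Real
open scoped NNReal

namespace ProbabilityTheory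

theorem integral_exp_mul_sq_gaussianReal {v : ℝ≥0} {a : ℝ} (h : 2 * a * v < 1) :
    ∫ x, exp (a * x ^ 2) ∂gaussianReal 0 v = (1 - 2 * a * v) ^ (-(1 / 2 : ℝ)) := by
  rcases eq_or_ne v 0 with rfl | hv
  · simp [gaussianReal_zero_var]
  have hv' : (0 : ℝ) < v := by positivity
  have hb : 0 < (1 - 2 * a * v) / (2 * v) := by apply div_pos <;> linarith
  have hpdf : ∀ x, gaussianPDFReal 0 v x • exp (a * x ^ 2)
      = (√(2 * π * v))⁻¹ * exp (-((1 - 2 * a * v) / (2 * v)) * x ^ 2) := by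
    intro x
    rw [gaussianPDFReal, smul_eq_mul, mul_assoc, ← exp_add]
    congr 2
    field_simp
    ring
  rw [integral_gaussianReal_eq_integral_smul hv]
  simp_rw [hpdf]
  rw [integral_const_mul, integral_gaussian, rpow_neg (by linarith), ← sqrt_eq_rpow,
    ← sqrt_inv, ← sqrt_inv, ← sqrt_mul (by positivity)]
  congr 1
  field_simp

theorem integral_exp_mul_gaussianReal (v : ℝ≥0) (t : ℝ) :
    ∫ x, exp (t * x) ∂gaussianReal 0 v = exp (v * t ^ 2 / 2) := by
  simpa [mgf] using congrFun (mgf_fun_id_gaussianReal (μ := 0) (v := v)) t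

variable {ι : Type*} [Fintype ι]

theorem integral_exp_mul_sum_sq_pi_gaussianReal {v : ℝ≥0} {a : ℝ} (h : 2 * a * v < 1) :
    ∫ x, exp (a * ∑ i, x i ^ 2) ∂Measure.pi (fun _ : ι => gaussianReal 0 v)
      = (1 - 2 * a * v) ^ (-(Fintype.card ι : ℝ) / 2) := by
  simp_rw [Finset.mul_sum, exp_sum]
  rw [integral_fintype_prod_eq_pow (fun y => exp (a * y ^ 2)),
    integral_exp_mul_sq_gaussianReal h, ← rpow_mul_natCast (by linarith)]
  ring_nf

theorem integral_exp_sum_mul_pi_gaussianReal (v : ℝ≥0) (t : ι → ℝ) :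
    ∫ x, exp (∑ i, t i * x i) ∂Measure.pi (fun _ : ι => gaussianReal 0 v)
      = exp (v * (∑ i, t i ^ 2) / 2) := by
  simp_rw [exp_sum]
  rw [integral_fintype_prod_eq_prod (fun i y => exp (t i * y))]
  simp_rw [integral_exp_mul_gaussianReal, ← exp_sum, Finset.mul_sum, Finset.sum_div]

theorem integral_exp_sq_sub_cross_pi_gaussianReal (v : ℝ≥0) (c : ℝ) (z : ι → ℝ) :
    ∫ x, exp (c * ((∑ i, z i ^ 2) - 2 * ∑ i, x i * z i))
        ∂Measure.pi (fun _ : ι => gaussianReal 0 v)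
      = exp ((c + 2 * c ^ 2 * v) * ∑ i, z i ^ 2) := by
  have hsplit : ∀ x : ι → ℝ, c * ((∑ i, z i ^ 2) - 2 * ∑ i, x i * z i)
      = c * (∑ i, z i ^ 2) + ∑ i, (-2 * c * z i) * x i := by
    intro x
    have hcross : ∑ i, (-2 * c * z i) * x i = -2 * c * ∑ i, x i * z i := by
      rw [Finset.mul_sum]
      exact Finset.sum_congr rfl fun i _ => by ring
    rw [hcross]
    ring
  simp_rw [hsplit, exp_add]
  rw [integral_const_mul, integral_exp_sum_mul_pi_gaussianReal, ← exp_add]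
  simp_rw [mul_pow, ← Finset.mul_sum]
  ring_nf

theorem integral_exp_sq_sub_cross_prod_pi_gaussianReal {v w : ℝ≥0} {c : ℝ}
    (h : 2 * (c + 2 * c ^ 2 * v) * w < 1) :
    ∫ p : (ι → ℝ) × (ι → ℝ), exp (c * ((∑ i, p.1 i ^ 2) - 2 * ∑ i, p.2 i * p.1 i))
        ∂(Measure.pi fun _ => gaussianReal 0 w).prod (Measure.pi fun _ => gaussianReal 0 v)
      = (1 - 2 * (c + 2 * c ^ 2 * v) * w) ^ (-(Fintype.card ι : ℝ) / 2) := by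
  -- A Bochner integral with nonzero value has an integrable integrand.
  have hint : Integrable (fun p : (ι → ℝ) × (ι → ℝ) =>
      exp (c * ((∑ i, p.1 i ^ 2) - 2 * ∑ i, p.2 i * p.1 i)))
      ((Measure.pi fun _ => gaussianReal 0 w).prod (Measure.pi fun _ => gaussianReal 0 v)) := by
    rw [integrable_prod_iff (by fun_prop)]
    refine ⟨ae_of_all _ fun z => .of_integral_ne_zero ?_, .of_integral_ne_zero ?_⟩
    · rw [integral_exp_sq_sub_cross_pi_gaussianReal]
      positivity
    · simp_rw [norm_of_nonneg (exp_nonneg _), integral_exp_sq_sub_cross_pi_gaussianReal,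
        integral_exp_mul_sum_sq_pi_gaussianReal h]
      exact (rpow_pos_of_pos (by linarith) _).ne'
  rw [integral_prod _ hint]
  simp_rw [integral_exp_sq_sub_cross_pi_gaussianReal]
  exact integral_exp_mul_sum_sq_pi_gaussianReal h

end ProbabilityTheory

theorem gaussian_energy_perturbation_expectation_general
    {Ω : Type*} [MeasurableSpace Ω] (P : Measure Ω) [IsProbabilityMeasure P]
    (nd : ℕ)
    (σo σt : ℝ)
    (τδ : ℝ)
    (hr : (σt ^ 2 / σo ^ 2) * (τδ ^ 2 + τδ) < 1)
    (X Z : Ω → Fin nd → ℝ) (hX : Measurable X) (hZ : Measurable Z)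
    (hindep : IndepFun X Z P)
    (hXlaw : Measure.map X P
      = Measure.pi fun _ : Fin nd => gaussianReal 0 (Real.toNNReal (σo ^ 2)))
    (hZlaw : Measure.map Z P
      = Measure.pi fun _ : Fin nd => gaussianReal 0 (Real.toNNReal (σt ^ 2))) :
    ∫ ω, Real.exp ((τδ / (2 * σo ^ 2)) *
        ((∑ i, (Z ω i) ^ 2) - 2 * ∑ i, X ω i * Z ω i)) ∂P
      = (1 - (τδ + τδ ^ 2) * (σt ^ 2 / σo ^ 2)) ^ (-(nd : ℝ) / 2) := by
  have hrate : 2 * (τδ / (2 * σo ^ 2) + 2 * (τδ / (2 * σo ^ 2)) ^ 2 * (σo ^ 2).toNNReal)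
      * (σt ^ 2).toNNReal = (τδ + τδ ^ 2) * (σt ^ 2 / σo ^ 2) := by
    rw [Real.coe_toNNReal _ (sq_nonneg _), Real.coe_toNNReal _ (sq_nonneg _)]
    field_simp
  have hlaw : P.map (fun ω => (Z ω, X ω)) = (Measure.map Z P).prod (Measure.map X P) :=
    (indepFun_iff_map_prod_eq_prod_map_map hZ.aemeasurable hX.aemeasurable).mp hindep.symm
  have key := integral_exp_sq_sub_cross_prod_pi_gaussianReal (ι := Fin nd)
    (c := τδ / (2 * σo ^ 2)) (v := (σo ^ 2).toNNReal) (w := (σt ^ 2).toNNReal)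
    (by rw [hrate]; linarith)
  rwa [hrate, Fintype.card_fin, ← hZlaw, ← hXlaw, ← hlaw,
    integral_map (hZ.prodMk hX).aemeasurable (by fun_prop)] at key

/-- Gaussian moment generating identity for the perturbation of the energy function in the
multi-variance replica exchange method:
`E[exp((τ_δ/(2σ_o²))(‖Z‖² − 2⟨X,Z⟩))] = (1 − (τ_δ + τ_δ²) r_σ)^{−n_d/2}`,
where `X` has i.i.d. `N(0, σ_o²)` coordinates, `Z` has i.i.d. `N(0, σ̃²)` coordinates,
`X` and `Z` are independent, and `r_σ = σ̃²/σ_o²` satisfies `r_σ(τ_δ² + τ_δ) < 1`. -/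
theorem gaussian_energy_perturbation_expectation
    {Ω : Type*} [MeasurableSpace Ω] (P : Measure Ω) [IsProbabilityMeasure P]
    (nd : ℕ) (hnd : 1 ≤ nd)
    (σo σt : ℝ) (hσo : 0 < σo) (hσt : 0 < σt)
    (τδ : ℝ) (hτδ : 0 < τδ)
    (hr : (σt ^ 2 / σo ^ 2) * (τδ ^ 2 + τδ) < 1)
    (X Z : Ω → Fin nd → ℝ) (hX : Measurable X) (hZ : Measurable Z)
    (hindep : IndepFun X Z P)
    (hXlaw : Measure.map X P
      = Measure.pi fun _ : Fin nd => gaussianReal 0 (Real.toNNReal (σo ^ 2)))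
    (hZlaw : Measure.map Z P
      = Measure.pi fun _ : Fin nd => gaussianReal 0 (Real.toNNReal (σt ^ 2))) :
    ∫ ω, Real.exp ((τδ / (2 * σo ^ 2)) *
        ((∑ i, (Z ω i) ^ 2) - 2 * ∑ i, X ω i * Z ω i)) ∂P
      = (1 - (τδ + τδ ^ 2) * (σt ^ 2 / σo ^ 2)) ^ (-(nd : ℝ) / 2) :=
  gaussian_energy_perturbation_expectation_general P nd σo σt τδ hr X Z hX hZ hindep hXlaw hZlaw
end

section
/- Let U : ℝⁿ → ℝ be differentiable with K-smooth gradient, i.e. ‖∇U(x) − ∇U(y)‖ ≤ K‖x − y‖ for all x, y with K > 0, let B ∈ ℝ^{n×n} be nonzero with Frobenius norm ‖B‖_F, and suppose the B-dissipativity condition ⟨B∇U(x), x⟩ ≥ α₁‖x‖² − α₂ holds for all x, with α₁ > 0 and α₂ ≥ 0. Then for every step size γ with 0 < γ ≤ α₁/(2‖B‖_F² K²) and every x ∈ ℝⁿ, the drift step satisfies ‖x − γ B∇U(x)‖² ≤ (1 − γα₁)‖x‖² + 2γα₂ + 2γ²‖B‖_F²‖∇U(0)‖². -/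
/-!
Expand `‖x - γ w‖² = ‖x‖² - 2γ⟨w, x⟩ + γ²‖w‖²` with `w = B∇U(x)`. Dissipativity bounds the
cross term by `-2γ(α₁‖x‖² - α₂)`; Cauchy–Schwarz row by row gives `‖w‖² ≤ ‖B‖_F²‖∇U(x)‖²`, and
Lipschitz growth gives `‖∇U(x)‖² ≤ 2K²‖x‖² + 2‖∇U(0)‖²`. The step-size restriction makes the
resulting `2γ²‖B‖_F²K²‖x‖²` cost at most `γα₁‖x‖²`, half of what dissipativity gained.
-/

open Matrix

lemma Matrix.norm_toEuclideanLin_sq_le {m n : Type*} [Fintype m] [Fintype n] [DecidableEq n]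
    (B : Matrix m n ℝ) (v : EuclideanSpace ℝ n) :
    ‖toEuclideanLin B v‖ ^ 2 ≤ (∑ i, ∑ j, B i j ^ 2) * ‖v‖ ^ 2 := by
  rw [EuclideanSpace.real_norm_sq_eq, EuclideanSpace.real_norm_sq_eq, Finset.sum_mul]
  exact Finset.sum_le_sum fun i _ => Finset.sum_mul_sq_le_sq_mul_sq _ _ _

lemma sq_norm_le_of_norm_sub_le {E F : Type*} [SeminormedAddCommGroup E]
    [SeminormedAddCommGroup F] {f : E → F} {K : ℝ}
    (hf : ∀ x y, ‖f x - f y‖ ≤ K * ‖x - y‖) (x : E) :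
    ‖f x‖ ^ 2 ≤ 2 * K ^ 2 * ‖x‖ ^ 2 + 2 * ‖f 0‖ ^ 2 := by
  have hgrowth : ‖f x‖ ≤ K * ‖x‖ + ‖f 0‖ := by
    simpa using (norm_le_norm_sub_add (f x) (f 0)).trans (add_le_add_left (hf x 0) _)
  nlinarith [norm_nonneg (f x), norm_nonneg (f 0), sq_nonneg (K * ‖x‖ - ‖f 0‖)]

lemma norm_sub_smul_sq_le_of_dissipative {E : Type*} [NormedAddCommGroup E]
    [InnerProductSpace ℝ E] {x w : E} {a b C D γ : ℝ}
    (hdiss : a * ‖x‖ ^ 2 - b ≤ inner ℝ w x) (hw : ‖w‖ ^ 2 ≤ C * ‖x‖ ^ 2 + D)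
    (hγ0 : 0 ≤ γ) (hγ : γ * C ≤ a) :
    ‖x - γ • w‖ ^ 2 ≤ (1 - γ * a) * ‖x‖ ^ 2 + 2 * γ * b + γ ^ 2 * D := by
  have hexpand : ‖x - γ • w‖ ^ 2 = ‖x‖ ^ 2 - 2 * γ * inner ℝ w x + γ ^ 2 * ‖w‖ ^ 2 := by
    rw [norm_sub_sq_real, real_inner_smul_right, real_inner_comm, norm_smul, mul_pow,
      Real.norm_eq_abs, sq_abs]
    ring
  rw [hexpand]
  nlinarith [mul_le_mul_of_nonneg_left hdiss hγ0, mul_le_mul_of_nonneg_left hw (sq_nonneg γ),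
    mul_le_mul_of_nonneg_right (mul_le_mul_of_nonneg_left hγ hγ0) (sq_nonneg ‖x‖)]

theorem preconditioned_drift_step_bound_general (n : ℕ)
    (gradU : EuclideanSpace ℝ (Fin n) → EuclideanSpace ℝ (Fin n))
    (K : ℝ)
    (hsmooth : ∀ x y, ‖gradU x - gradU y‖ ≤ K * ‖x - y‖)
    (B : Matrix (Fin n) (Fin n) ℝ)
    (α₁ α₂ : ℝ) (hα₁ : 0 < α₁)
    (hdiss : ∀ x : EuclideanSpace ℝ (Fin n),
      α₁ * ‖x‖ ^ 2 - α₂ ≤ (inner ℝ (Matrix.toEuclideanLin B (gradU x)) x : ℝ))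
    (γ : ℝ) (hγ0 : 0 < γ)
    (hγ : γ ≤ α₁ / (2 * (∑ i, ∑ j, (B i j) ^ 2) * K ^ 2))
    (x : EuclideanSpace ℝ (Fin n)) :
    ‖x - γ • Matrix.toEuclideanLin B (gradU x)‖ ^ 2
      ≤ (1 - γ * α₁) * ‖x‖ ^ 2 + 2 * γ * α₂
        + 2 * γ ^ 2 * (∑ i, ∑ j, (B i j) ^ 2) * ‖gradU 0‖ ^ 2 := by
  set F := ∑ i, ∑ j, (B i j) ^ 2
  have hF : 0 ≤ F := by positivity
  have hw : ‖toEuclideanLin B (gradU x)‖ ^ 2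
      ≤ 2 * F * K ^ 2 * ‖x‖ ^ 2 + 2 * F * ‖gradU 0‖ ^ 2 := by
    calc _ ≤ F * ‖gradU x‖ ^ 2 := B.norm_toEuclideanLin_sq_le (gradU x)
      _ ≤ F * (2 * K ^ 2 * ‖x‖ ^ 2 + 2 * ‖gradU 0‖ ^ 2) :=
        mul_le_mul_of_nonneg_left (sq_norm_le_of_norm_sub_le hsmooth x) hF
      _ = 2 * F * K ^ 2 * ‖x‖ ^ 2 + 2 * F * ‖gradU 0‖ ^ 2 := by ring
  have hstep : γ * (2 * F * K ^ 2) ≤ α₁ := mul_le_of_le_div₀ hα₁.le (by positivity) hγ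
  have := norm_sub_smul_sq_le_of_dissipative (hdiss x) hw hγ0.le hstep
  linarith

/-- One-step contraction bound for the preconditioned gradient (drift) step: under
`K`-smoothness of `∇U` and `B`-dissipativity `⟨B∇U(x), x⟩ ≥ α₁‖x‖² − α₂`, for any step
size `0 < γ ≤ α₁/(2‖B‖_F² K²)`,
`‖x − γ B∇U(x)‖² ≤ (1 − γα₁)‖x‖² + 2γα₂ + 2γ²‖B‖_F²‖∇U(0)‖²`. -/
theorem preconditioned_drift_step_bound (n : ℕ)
    (U : EuclideanSpace ℝ (Fin n) → ℝ)
    (gradU : EuclideanSpace ℝ (Fin n) → EuclideanSpace ℝ (Fin n))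
    (hgrad : ∀ x, HasGradientAt U (gradU x) x)
    (K : ℝ) (hK : 0 < K)
    (hsmooth : ∀ x y, ‖gradU x - gradU y‖ ≤ K * ‖x - y‖)
    (B : Matrix (Fin n) (Fin n) ℝ) (hB : B ≠ 0)
    (α₁ α₂ : ℝ) (hα₁ : 0 < α₁) (hα₂ : 0 ≤ α₂)
    (hdiss : ∀ x : EuclideanSpace ℝ (Fin n),
      α₁ * ‖x‖ ^ 2 - α₂ ≤ (inner ℝ (Matrix.toEuclideanLin B (gradU x)) x : ℝ))
    (γ : ℝ) (hγ0 : 0 < γ)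
    (hγ : γ ≤ α₁ / (2 * (∑ i, ∑ j, (B i j) ^ 2) * K ^ 2))
    (x : EuclideanSpace ℝ (Fin n)) :
    ‖x - γ • Matrix.toEuclideanLin B (gradU x)‖ ^ 2
      ≤ (1 - γ * α₁) * ‖x‖ ^ 2 + 2 * γ * α₂
        + 2 * γ ^ 2 * (∑ i, ∑ j, (B i j) ^ 2) * ‖gradU 0‖ ^ 2 :=
  preconditioned_drift_step_bound_general n gradU K hsmooth B α₁ α₂ hα₁ hdiss γ hγ0 hγ x
end
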